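/- arXiv:1508.02810 — 3 statements merged into one kernel-verified Lean document; each statement's English description precedes it below -/
import Mathlib

section
/- With $H$, $Q$, $r$ as in the NewSamp construction (eigenvalues $\lambda_1 \ge \cdots \ge \lambda_p > 0$, $Q = \lambda_{r+1}^{-1} I + U_r(\Lambda_r^{-1} - \lambda_{r+1}^{-1} I_r) U_r^T$), if the step size satisfies $0 < \eta \le 2/(1 + \lambda_p/\lambda_{r+1})$, then $\|I - \eta Q H\|_2 = 1 - \eta \lambda_p / \lambda_{r+1} < 1$. -/
open scoped Matrix.Norms.L2Operator
open Matrix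

/-! In the orthonormal eigenbasis `u` both `Q` and `H` are diagonal, so `1 - η • (Q * H)` is the
orthogonal conjugate of the diagonal matrix with entries `1 - η t_j`, where `t_j = q_j λ_j` (with
`q_j` the eigenvalues of `Q`) lies in `[λ_p / λ_{r+1}, 1]`. The L2 operator norm is invariant under
orthogonal conjugation, so it is the largest `|1 - η t_j|`; the step-size condition makes this
`1 - η λ_p / λ_{r+1}`, attained at `j = p`. -/

namespace Matrix

variable {m : Type*} [Fintype m] [DecidableEq m]

lemma l2_opNorm_diagonal_of_forall_norm_le {𝕜 : Type*} [RCLike 𝕜] (d : m → 𝕜) {i₀ : m}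
    (hmax : ∀ i, ‖d i‖ ≤ ‖d i₀‖) : ‖diagonal d‖ = ‖d i₀‖ := by
  rw [l2_opNorm_diagonal]
  exact le_antisymm ((pi_norm_le_iff_of_nonneg (norm_nonneg _)).2 hmax) (norm_le_pi_norm d i₀)

lemma l2_opNorm_star_mul_mul_of_mem_unitaryGroup {𝕜 : Type*} [RCLike 𝕜] {U : Matrix m m 𝕜}
    (hU : U ∈ unitaryGroup m 𝕜) (A : Matrix m m 𝕜) : ‖star U * A * U‖ = ‖A‖ := by
  rw [CStarRing.norm_mul_mem_unitary _ hU, CStarRing.norm_mem_unitary_mul A (Unitary.star_mem hU)]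

lemma of_mem_unitaryGroup_of_dotProduct {u : m → m → ℝ}
    (horth : ∀ i j, u i ⬝ᵥ u j = if i = j then 1 else 0) : of u ∈ unitaryGroup m ℝ := by
  refine mem_unitaryGroup_iff.2 (ext fun i j => ?_)
  simpa [mul_apply, one_apply, dotProduct] using horth i j

lemma sum_smul_vecMulVec_self (u : m → m → ℝ) (c : m → ℝ) :
    ∑ j, c j • vecMulVec (u j) (u j) = star (of u) * diagonal c * of u := by
  ext i k
  rw [mul_apply]
  simp only [sum_apply, smul_apply, vecMulVec_apply, smul_eq_mul, mul_diagonal, star_apply,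
    of_apply, star_trivial]
  exact Finset.sum_congr rfl fun j _ => by ring

section Orthonormal

variable {u : m → m → ℝ} (horth : ∀ i j, u i ⬝ᵥ u j = if i = j then 1 else 0)
include horth

lemma sum_vecMulVec_self_of_dotProduct : ∑ j, vecMulVec (u j) (u j) = 1 := by
  simpa [mem_unitaryGroup_iff'.1 (of_mem_unitaryGroup_of_dotProduct horth)] using
    sum_smul_vecMulVec_self u 1

lemma sum_smul_vecMulVec_self_mul_of_dotProduct (c d : m → ℝ) :
    (∑ j, c j • vecMulVec (u j) (u j)) * ∑ j, d j • vecMulVec (u j) (u j) =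
      ∑ j, (c j * d j) • vecMulVec (u j) (u j) := by
  have hU := mem_unitaryGroup_iff.1 (of_mem_unitaryGroup_of_dotProduct horth)
  simp only [sum_smul_vecMulVec_self]
  rw [mul_assoc, ← mul_assoc (of u), ← mul_assoc (of u), hU, one_mul, ← mul_assoc,
    mul_assoc _ (diagonal c), diagonal_mul_diagonal]

lemma one_sub_smul_sum_smul_vecMulVec_self_of_dotProduct (η : ℝ) (c : m → ℝ) :
    1 - η • ∑ j, c j • vecMulVec (u j) (u j) = ∑ j, (1 - η * c j) • vecMulVec (u j) (u j) := by
  simp only [← sum_vecMulVec_self_of_dotProduct horth, Finset.smul_sum, smul_smul,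
    ← Finset.sum_sub_distrib, sub_smul, one_smul]

lemma smul_one_add_sum_filter_of_dotProduct (p : m → Prop) [DecidablePred p] (a : ℝ)
    (b : m → ℝ) :
    a • (1 : Matrix m m ℝ) + ∑ j ∈ Finset.univ.filter p, (b j - a) • vecMulVec (u j) (u j) =
      ∑ j, (if p j then b j else a) • vecMulVec (u j) (u j) := by
  rw [← sum_vecMulVec_self_of_dotProduct horth, Finset.smul_sum, Finset.sum_filter,
    ← Finset.sum_add_distrib]
  refine Finset.sum_congr rfl fun j _ => ?_
  split_ifs <;> simp [← add_smul]

lemma l2_opNorm_sum_smul_vecMulVec_self_of_dotProduct (c : m → ℝ) {i₀ : m}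
    (hmax : ∀ i, |c i| ≤ |c i₀|) : ‖∑ j, c j • vecMulVec (u j) (u j)‖ = |c i₀| := by
  rw [sum_smul_vecMulVec_self, l2_opNorm_star_mul_mul_of_mem_unitaryGroup
    (of_mem_unitaryGroup_of_dotProduct horth), l2_opNorm_diagonal_of_forall_norm_le c hmax,
    Real.norm_eq_abs]

end Orthonormal

end Matrix

lemma abs_one_sub_mul_le_of_mem_Icc {x t η : ℝ} (ht : t ∈ Set.Icc x 1) (hη : 0 ≤ η)
    (hstep : η * (1 + x) ≤ 2) : |1 - η * t| ≤ 1 - η * x := by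
  have hxt : η * x ≤ η * t := mul_le_mul_of_nonneg_left ht.1 hη
  have ht1 : η * t ≤ η := mul_le_of_le_one_right hη ht.2
  rw [abs_le]
  constructor <;> linarith

lemma thresholdedInv_mul_mem_Icc {n r : ℕ} (hr : r < n + 1) {lam : Fin (n + 1) → ℝ}
    (hlam : Antitone lam) (hpos : ∀ i, 0 < lam i) (j : Fin (n + 1)) :
    (if (j : ℕ) < r then (lam j)⁻¹ else (lam ⟨r, hr⟩)⁻¹) * lam j ∈
      Set.Icc (lam (Fin.last n) / lam ⟨r, hr⟩) 1 := by
  have hLr : lam (Fin.last n) ≤ lam ⟨r, hr⟩ := hlam (Fin.le_last _)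
  split_ifs with hj
  · rw [inv_mul_cancel₀ (hpos j).ne']
    exact ⟨div_le_one_of_le₀ hLr (hpos _).le, le_rfl⟩
  · rw [inv_mul_eq_div]
    have hjr : lam j ≤ lam ⟨r, hr⟩ := hlam (Fin.le_def.2 (not_lt.1 hj))
    exact ⟨div_le_div_of_nonneg_right (hlam (Fin.le_last j)) (hpos _).le,
      div_le_one_of_le₀ hjr (hpos _).le⟩

theorem newsamp_stepsize_contraction
    {n r : ℕ} (hr : r < n + 1)
    (u : Fin (n + 1) → (Fin (n + 1) → ℝ))
    (horth : ∀ i j, dotProduct (u i) (u j) = if i = j then (1:ℝ) else 0)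
    (lam : Fin (n + 1) → ℝ) (hlam : Antitone lam) (hpos : ∀ i, 0 < lam i)
    (H Q : Matrix (Fin (n + 1)) (Fin (n + 1)) ℝ)
    (hH : H = ∑ i, lam i • Matrix.vecMulVec (u i) (u i))
    (hQ : Q = (lam ⟨r, hr⟩)⁻¹ • (1 : Matrix (Fin (n + 1)) (Fin (n + 1)) ℝ) +
      ∑ i ∈ Finset.univ.filter (fun i : Fin (n + 1) => (i : ℕ) < r),
        ((lam i)⁻¹ - (lam ⟨r, hr⟩)⁻¹) • Matrix.vecMulVec (u i) (u i))
    (η : ℝ) (hη : 0 < η)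
    (hstep : η ≤ 2 / (1 + lam (Fin.last n) / lam ⟨r, hr⟩)) :
    ‖(1 : Matrix (Fin (n + 1)) (Fin (n + 1)) ℝ) - η • (Q * H)‖ =
      1 - η * lam (Fin.last n) / lam ⟨r, hr⟩ ∧
    1 - η * lam (Fin.last n) / lam ⟨r, hr⟩ < 1 := by
  set x := lam (Fin.last n) / lam ⟨r, hr⟩
  set t : Fin (n + 1) → ℝ := fun j =>
    (if (j : ℕ) < r then (lam j)⁻¹ else (lam ⟨r, hr⟩)⁻¹) * lam j
  have hx : 0 < x := div_pos (hpos _) (hpos _)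
  have hstep' : η * (1 + x) ≤ 2 := (le_div_iff₀ (by positivity)).1 hstep
  have ht := thresholdedInv_mul_mem_Icc hr hlam hpos
  have ht_last : t (Fin.last n) = x := by
    simp only [t, Fin.val_last, if_neg (not_lt.2 (Nat.le_of_lt_succ hr)),
      inv_mul_eq_div, x]
  have hM : 1 - η • (Q * H) = ∑ j, (1 - η * t j) • vecMulVec (u j) (u j) := by
    rw [hQ, hH, smul_one_add_sum_filter_of_dotProduct horth,
      sum_smul_vecMulVec_self_mul_of_dotProduct horth,
      one_sub_smul_sum_smul_vecMulVec_self_of_dotProduct horth]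
  have hcontr : ∀ j, |1 - η * t j| ≤ 1 - η * x :=
    fun j => abs_one_sub_mul_le_of_mem_Icc (ht j) hη.le hstep'
  have hnonneg : 0 ≤ 1 - η * x := (abs_nonneg _).trans (hcontr 0)
  have hmax : ∀ j, |1 - η * t j| ≤ |1 - η * t (Fin.last n)| := by
    rwa [ht_last, abs_of_nonneg hnonneg]
  rw [hM, l2_opNorm_sum_smul_vecMulVec_self_of_dotProduct horth _ hmax, ht_last,
    abs_of_nonneg hnonneg, mul_div_assoc]
  exact ⟨rfl, by linarith [mul_pos hη hx]⟩
end

section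
/- Let $a, b > 0$ satisfy $2b^2/a > e$, and set $\epsilon = \big(\tfrac{a}{2}\log(2b^2/a)\big)^{1/2}$. Then $\epsilon^2 \ge a \log(b/\epsilon)$. -/
theorem epsilon_log_inequality (a b ε : ℝ)
    (ha : 0 < a) (hb : 0 < b)
    (hcond : Real.exp 1 < 2 * b ^ 2 / a)
    (hε : ε = Real.sqrt (a / 2 * Real.log (2 * b ^ 2 / a))) :
    ε ^ 2 ≥ a * Real.log (b / ε) := by
  have hx : (0:ℝ) < 2 * b ^ 2 / a := lt_trans (Real.exp_pos 1) hcond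
  have hL : 1 < Real.log (2 * b ^ 2 / a) := (Real.lt_log_iff_exp_lt hx).mpr hcond
  set L := Real.log (2 * b ^ 2 / a) with hLdef
  have harg : 0 < a / 2 * L := mul_pos (by linarith) (by linarith)
  have hεpos : 0 < ε := by rw [hε]; exact Real.sqrt_pos.mpr harg
  have hε2 : ε ^ 2 = a / 2 * L := by
    rw [hε, sq, Real.mul_self_sqrt harg.le]
  -- (b/ε)^2 ≤ 2*b^2/a
  have hsq : (b / ε) ^ 2 ≤ 2 * b ^ 2 / a := by
    rw [div_pow, hε2]
    rw [div_le_div_iff₀ (by positivity) ha]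
    nlinarith [sq_nonneg b, mul_nonneg (sq_nonneg b) ha.le]
  have hlog : 2 * Real.log (b / ε) ≤ L := by
    have := Real.log_le_log (by positivity : (0:ℝ) < (b / ε) ^ 2) hsq
    rwa [Real.log_pow, Nat.cast_ofNat] at this
  nlinarith [hlog, hε2]
end

section
/- Let $\xi_1^*, \xi_2^*, \delta \ge 0$ with $\xi_1^* + \delta < 1$, and let $(\Delta_t)$ be nonnegative reals satisfying $\Delta_{t+1} \le (\xi_1^* + \delta)\Delta_t + (\xi_2^* + \delta)\Delta_t^2$ for all $t$, with $\xi_2^* + \delta > 0$. If $\Delta_0 < \dfrac{1 - \xi_1^* - \delta}{\xi_2^* + \delta}$, then $(\Delta_t)$ is strictly decreasing (while positive) and converges to $0$. -/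
theorem newsamp_sufficient_condition_for_convergence
    (Δ : ℕ → ℝ) (ξ1 ξ2 δ : ℝ)
    (hξ1 : 0 ≤ ξ1) (hξ2 : 0 ≤ ξ2) (hδ : 0 ≤ δ)
    (hsum : ξ1 + δ < 1) (hpos : 0 < ξ2 + δ)
    (hΔ : ∀ t, 0 ≤ Δ t)
    (hrec : ∀ t, Δ (t + 1) ≤ (ξ1 + δ) * Δ t + (ξ2 + δ) * (Δ t) ^ 2)
    (h0 : Δ 0 < (1 - ξ1 - δ) / (ξ2 + δ)) :
    (∀ t, 0 < Δ t → Δ (t + 1) < Δ t) ∧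
    Filter.Tendsto Δ Filter.atTop (nhds 0) := by
  set a := ξ1 + δ with ha
  set b := ξ2 + δ with hb
  have ha0 : 0 ≤ a := by positivity
  have hc1 : a + b * Δ 0 < 1 := by
    rw [lt_div_iff₀ hpos] at h0
    simp only [ha, hb]
    nlinarith
  set c := a + b * Δ 0 with hc
  have hc0 : 0 ≤ c := by
    have := hΔ 0
    positivity
  have key : ∀ t, Δ t ≤ c ^ t * Δ 0 := by
    intro t
    induction t with
    | zero => simp
    | succ n ih =>
      have h1 : Δ n ≤ Δ 0 := by
        calc Δ n ≤ c ^ n * Δ 0 := ih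
          _ ≤ 1 * Δ 0 := by
              apply mul_le_mul_of_nonneg_right _ (hΔ 0)
              exact pow_le_one₀ hc0 hc1.le
          _ = Δ 0 := one_mul _
      have h2 : Δ (n + 1) ≤ c * Δ n := by
        have := hrec n
        nlinarith [mul_le_mul_of_nonneg_right h1 (hΔ n), hpos, hΔ n]
      calc Δ (n + 1) ≤ c * Δ n := h2
        _ ≤ c * (c ^ n * Δ 0) := by
            exact mul_le_mul_of_nonneg_left ih hc0
        _ = c ^ (n + 1) * Δ 0 := by ring
  constructor
  · intro t ht
    have h1 : Δ t ≤ Δ 0 := by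
      calc Δ t ≤ c ^ t * Δ 0 := key t
        _ ≤ 1 * Δ 0 := mul_le_mul_of_nonneg_right (pow_le_one₀ hc0 hc1.le) (hΔ 0)
        _ = Δ 0 := one_mul _
    have := hrec t
    nlinarith [mul_le_mul_of_nonneg_right h1 ht.le, mul_pos (sub_pos.mpr hc1) ht]
  · have h1 : Filter.Tendsto (fun t => c ^ t * Δ 0) Filter.atTop (nhds 0) := by
      have := tendsto_pow_atTop_nhds_zero_of_lt_one hc0 hc1
      simpa using this.mul_const (Δ 0)
    exact squeeze_zero hΔ key h1
end
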